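/- arXiv:1501.03925 — 3 statements merged into one kernel-verified Lean document; each statement's English description precedes it below -/
import Mathlib

section
/- For β ∈ (1,2), a smooth function f, and x > a, the Caputo derivative satisfies D^β_{a+⋆}f(x) = (1/Γ(-β)) ∫_0^{x-a} (f(x-z) - f(x) + f'(x)z) z^{-1-β} dz + (f(x) - f(a))(x-a)^{-β}/Γ(1-β) + (β f'(x) - f'(a))(x-a)^{1-β}/Γ(2-β). -/
/-!
Substituting `t = x - z` turns the Caputo integral into `∫₀^L z^(1-β) g''(z) dz` with
`L = x - a` and `g z = f (x - z) - f x + f' x * z`, so that `g 0 = g' 0 = 0`. Integrating by parts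
twice moves both derivatives onto the weight `z^(1-β)`. Although the new weights `z^(-β)` and
`z^(-1-β)` are not integrable at `0`, the bounds `g' = O(z)` and `g = O(z²)` make the new integrands
`O(z^(1-β))` and kill the boundary terms at `0`. The Gamma factors then match through
`Γ(s + 1) = s Γ(s)`.
-/

open Real MeasureTheory Set Filter Topology

theorem abs_rpow_mul_le {z p C w : ℝ} (k : ℕ) (hz : 0 < z) (hw : |w| ≤ C * z ^ k) :
    |z ^ p * w| ≤ C * z ^ (p + k) := by
  rw [abs_mul, abs_of_pos (rpow_pos_of_pos hz p), rpow_add_natCast hz.ne']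
  calc z ^ p * |w| ≤ z ^ p * (C * z ^ k) := by gcongr
    _ = C * (z ^ p * z ^ k) := by ring

theorem intervalIntegrable_of_abs_le_rpow {φ : ℝ → ℝ} {C r L : ℝ} (hr : -1 < r) (hL : 0 ≤ L)
    (hφ : ContinuousOn φ (Ioc 0 L)) (hbd : ∀ z ∈ Ioc 0 L, |φ z| ≤ C * z ^ r) :
    IntervalIntegrable φ volume 0 L := by
  refine ((intervalIntegral.intervalIntegrable_rpow' hr).const_mul C).mono_fun' ?_ ?_ <;>
    rw [uIoc_of_le hL]
  · exact hφ.aestronglyMeasurable measurableSet_Ioc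
  · exact (ae_restrict_mem measurableSet_Ioc).mono hbd

theorem continuousOn_Icc_of_abs_le_rpow {φ : ℝ → ℝ} {C r L : ℝ} (hr : 0 < r) (hL : 0 ≤ L)
    (hφ : ContinuousOn φ (Ioc 0 L)) (hφ0 : φ 0 = 0) (hbd : ∀ z ∈ Ioc 0 L, |φ z| ≤ C * z ^ r) :
    ContinuousOn φ (Icc 0 L) := by
  rw [← Ioc_insert_left hL]
  rintro z (rfl | hz) <;> refine continuousWithinAt_insert.2 ?_
  · rw [ContinuousWithinAt, hφ0]
    have hpow : Tendsto (fun y : ℝ => C * y ^ r) (𝓝[Ioc 0 L] 0) (𝓝 0) := by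
      simpa [zero_rpow hr.ne'] using
        ((continuousAt_rpow_const 0 r (Or.inr hr.le)).tendsto.const_mul C).mono_left
          nhdsWithin_le_nhds
    exact squeeze_zero_norm' (eventually_nhdsWithin_of_forall hbd) hpow
  · exact hφ z hz

theorem abs_le_mul_pow_succ_of_abs_deriv_le {v v' : ℝ → ℝ} {C L : ℝ} (k : ℕ) (hC : 0 ≤ C)
    (hv : ∀ z ∈ Icc 0 L, HasDerivAt v (v' z) z) (hv0 : v 0 = 0)
    (hbd : ∀ z ∈ Icc 0 L, |v' z| ≤ C * z ^ k) :
    ∀ z ∈ Icc 0 L, |v z| ≤ C * z ^ (k + 1) := by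
  intro s hs
  have hsub : Icc 0 s ⊆ Icc 0 L := Icc_subset_Icc le_rfl hs.2
  have hbd_s : ∀ z ∈ Ico 0 s, ‖v' z‖ ≤ C * s ^ k := fun z hz =>
    (hbd z (hsub (Ico_subset_Icc_self hz))).trans (by gcongr; exacts [hz.1, hz.2.le])
  have := norm_image_sub_le_of_norm_deriv_le_segment'
    (fun z hz => (hv z (hsub hz)).hasDerivWithinAt) hbd_s s (right_mem_Icc.2 hs.1)
  simpa [hv0, pow_succ, mul_assoc] using this

/-- Only the product `u * v` has to be continuous up to the endpoints, so `u` may blow up there. -/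
theorem integral_mul_deriv_eq_deriv_mul_of_continuousOn_mul {u u' v v' : ℝ → ℝ} {a b : ℝ}
    (hab : a ≤ b) (huv : ContinuousOn (fun z => u z * v z) (Icc a b))
    (hu : ∀ z ∈ Ioo a b, HasDerivAt u (u' z) z) (hv : ∀ z ∈ Ioo a b, HasDerivAt v (v' z) z)
    (huv' : IntervalIntegrable (fun z => u z * v' z) volume a b)
    (hu'v : IntervalIntegrable (fun z => u' z * v z) volume a b) :
    ∫ z in a..b, u z * v' z = u b * v b - u a * v a - ∫ z in a..b, u' z * v z := by
  have := intervalIntegral.integral_eq_sub_of_hasDerivAt_of_le hab huv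
    (fun z hz => (hu z hz).mul (hv z hz)) (hu'v.add huv')
  rw [intervalIntegral.integral_add hu'v huv'] at this
  linarith

theorem integral_rpow_mul_deriv_eq {v v' : ℝ → ℝ} {p C L : ℝ} (k : ℕ) (hpk : -1 < p + k)
    (hL : 0 ≤ L) (hC : 0 ≤ C) (hv : ∀ z ∈ Icc 0 L, HasDerivAt v (v' z) z)
    (hv'c : ContinuousOn v' (Icc 0 L)) (hv0 : v 0 = 0)
    (hbd : ∀ z ∈ Icc 0 L, |v' z| ≤ C * z ^ k) :
    ∫ z in 0..L, z ^ p * v' z = L ^ p * v L - p * ∫ z in 0..L, z ^ (p - 1) * v z := by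
  have hvbd := abs_le_mul_pow_succ_of_abs_deriv_le k hC hv hv0 hbd
  have hrpow (q : ℝ) : ContinuousOn (fun z : ℝ => z ^ q) (Ioc 0 L) :=
    continuousOn_id.rpow_const fun z hz => Or.inl hz.1.ne'
  have hvc : ContinuousOn v (Ioc 0 L) := fun z hz =>
    (hv z (Ioc_subset_Icc_self hz)).continuousAt.continuousWithinAt
  have huv : ContinuousOn (fun z => z ^ p * v z) (Icc 0 L) :=
    continuousOn_Icc_of_abs_le_rpow (C := C) (r := p + (k + 1 : ℕ)) (by push_cast; linarith) hL
      ((hrpow p).mul hvc) (by simp [hv0])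
      fun z hz => abs_rpow_mul_le (k + 1) hz.1 (hvbd z (Ioc_subset_Icc_self hz))
  have huv' : IntervalIntegrable (fun z => z ^ p * v' z) volume 0 L :=
    intervalIntegrable_of_abs_le_rpow hpk hL ((hrpow p).mul (hv'c.mono Ioc_subset_Icc_self))
      fun z hz => abs_rpow_mul_le k hz.1 (hbd z (Ioc_subset_Icc_self hz))
  have hu'v : IntervalIntegrable (fun z => z ^ (p - 1) * v z) volume 0 L := by
    refine intervalIntegrable_of_abs_le_rpow (C := C) hpk hL ((hrpow _).mul hvc) fun z hz => ?_
    have := abs_rpow_mul_le (p := p - 1) (k + 1) hz.1 (hvbd z (Ioc_subset_Icc_self hz))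
    rwa [show p - 1 + ((k + 1 : ℕ) : ℝ) = p + k by push_cast; ring] at this
  have hibp := integral_mul_deriv_eq_deriv_mul_of_continuousOn_mul (u' := fun z => p * z ^ (p - 1))
    hL huv (fun z hz => hasDerivAt_rpow_const (Or.inl hz.1.ne'))
    (fun z hz => hv z (Ioo_subset_Icc_self hz)) huv'
    (by simpa only [mul_assoc] using hu'v.const_mul p)
  simpa only [hv0, mul_zero, sub_zero, mul_assoc, intervalIntegral.integral_const_mul] using hibp

theorem integral_rpow_mul_second_deriv_eq {g g' g'' : ℝ → ℝ} {p L : ℝ} (hp : -1 < p)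
    (hL : 0 ≤ L) (hg : ∀ z ∈ Icc 0 L, HasDerivAt g (g' z) z)
    (hg' : ∀ z ∈ Icc 0 L, HasDerivAt g' (g'' z) z) (hg''c : ContinuousOn g'' (Icc 0 L))
    (hg0 : g 0 = 0) (hg'0 : g' 0 = 0) :
    ∫ z in 0..L, z ^ p * g'' z = L ^ p * g' L - p * L ^ (p - 1) * g L
      + p * (p - 1) * ∫ z in 0..L, z ^ (p - 2) * g z := by
  obtain ⟨M, hM⟩ := isCompact_Icc.exists_bound_of_continuousOn hg''c
  have hM0 : 0 ≤ M := (norm_nonneg _).trans (hM 0 (left_mem_Icc.2 hL))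
  have hg''bd : ∀ z ∈ Icc 0 L, |g'' z| ≤ M * z ^ 0 := by simpa using hM
  have hg'c : ContinuousOn g' (Icc 0 L) := fun z hz => (hg' z hz).continuousAt.continuousWithinAt
  rw [integral_rpow_mul_deriv_eq 0 (by simpa using hp) hL hM0 hg' hg''c hg'0 hg''bd,
    integral_rpow_mul_deriv_eq 1 (by push_cast; linarith) hL hM0 hg hg'c hg0
      (abs_le_mul_pow_succ_of_abs_deriv_le 0 hM0 hg' hg'0 hg''bd),
    show p - 1 - 1 = p - 2 by ring]
  ring

theorem integral_sub_rpow_mul_second_deriv_eq {f f' f'' : ℝ → ℝ} {a x p : ℝ} (hp : -1 < p)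
    (hax : a ≤ x) (hf' : ∀ t ∈ Icc a x, HasDerivAt f (f' t) t)
    (hf'' : ∀ t ∈ Icc a x, HasDerivAt f' (f'' t) t) (hf''c : ContinuousOn f'' (Icc a x)) :
    ∫ t in a..x, (x - t) ^ p * f'' t
      = (x - a) ^ p * (f' x - f' a) - p * (x - a) ^ (p - 1) * (f a - f x + f' x * (x - a))
        + p * (p - 1) * ∫ z in 0..x - a, z ^ (p - 2) * (f (x - z) - f x + f' x * z) := by
  have hmaps : MapsTo (fun z => x - z) (Icc 0 (x - a)) (Icc a x) := fun z hz => by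
    constructor <;> linarith [hz.1, hz.2]
  have hsubst : ∫ t in a..x, (x - t) ^ p * f'' t = ∫ z in 0..x - a, z ^ p * f'' (x - z) := by
    simpa using (intervalIntegral.integral_comp_sub_left (a := 0) (b := x - a)
      (fun t => (x - t) ^ p * f'' t) x).symm
  rw [hsubst]
  simpa only [sub_sub_cancel] using integral_rpow_mul_second_deriv_eq (p := p)
    (g := fun z => f (x - z) - f x + f' x * z) (g' := fun z => f' x - f' (x - z))
    hp (by linarith)
    (fun z hz => ((((hf' _ (hmaps hz)).comp_const_sub x z).sub_const (f x)).add
      ((hasDerivAt_id' z).const_mul (f' x))).congr_deriv (by ring))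
    (fun z hz => (((hf'' _ (hmaps hz)).comp_const_sub x z).const_sub (f' x)).congr_deriv
      (neg_neg _))
    (hf''c.comp (continuousOn_const.sub continuousOn_id) hmaps) (by simp) (by simp)

/-- For β ∈ (1,2), the Caputo derivative equals the generator-type
singular integral plus boundary terms. -/
theorem caputo_generator_form_order_two (β a : ℝ) (hβ : β ∈ Set.Ioo (1:ℝ) 2)
    (f f' f'' : ℝ → ℝ) (hf' : ∀ t ∈ Set.Ici a, HasDerivAt f (f' t) t)
    (hf'' : ∀ t ∈ Set.Ici a, HasDerivAt f' (f'' t) t)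
    (hf''c : ContinuousOn f'' (Set.Ici a)) (x : ℝ) (hx : a < x) :
    (1 / Real.Gamma (2 - β)) * ∫ t in a..x, (x - t) ^ (1 - β) * f'' t
      = (1 / Real.Gamma (-β)) *
          (∫ z in (0:ℝ)..(x - a), (f (x - z) - f x + f' x * z) * z ^ (-1 - β))
        + (f x - f a) * (x - a) ^ (-β) / Real.Gamma (1 - β)
        + (β * f' x - f' a) * (x - a) ^ (1 - β) / Real.Gamma (2 - β) := by
  obtain ⟨hβ1, hβ2⟩ := hβ
  have hparts := integral_sub_rpow_mul_second_deriv_eq (p := 1 - β) (by linarith) hx.le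
    (fun t ht => hf' t ht.1) (fun t ht => hf'' t ht.1) (hf''c.mono Icc_subset_Ici_self)
  rw [show 1 - β - 1 = -β by ring, show 1 - β - 2 = -1 - β by ring] at hparts
  have hcomm : ∫ z in (0:ℝ)..(x - a), (f (x - z) - f x + f' x * z) * z ^ (-1 - β)
      = ∫ z in 0..x - a, z ^ (-1 - β) * (f (x - z) - f x + f' x * z) :=
    intervalIntegral.integral_congr fun z _ => mul_comm _ _
  have h1β : 1 - β ≠ 0 := by linarith
  have hΓ1 : Gamma (1 - β) = -β * Gamma (-β) := by
    simpa [neg_add_eq_sub] using Gamma_add_one (neg_ne_zero.2 (by linarith : β ≠ 0))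
  have hΓ2 : Gamma (2 - β) = (1 - β) * Gamma (1 - β) := by
    simpa [show 1 - β + 1 = 2 - β by ring] using Gamma_add_one h1β
  have hΓ : Gamma (-β) ≠ 0 := fun h => by
    simpa [hΓ2, hΓ1, h] using Gamma_pos_of_pos (by linarith : 0 < 2 - β)
  have hLpow : (x - a) ^ (1 - β) = (x - a) ^ (-β) * (x - a) := by
    rw [← rpow_add_one (by linarith : x - a ≠ 0), neg_add_eq_sub]
  rw [hparts, hcomm, hΓ2, hΓ1, hLpow]
  field_simp
  ring
end

section
/- For β ∈ (1,2), a smooth function f, and x < a, the left Caputo derivative satisfies D^β_{a-⋆}f(x) = (1/Γ(-β)) ∫_0^{a-x} (f(x+z) - f(x) - f'(x)z) z^{-1-β} dz + (f(x) - f(a))(a-x)^{-β}/Γ(1-β) - (β f'(x) - f'(a))(a-x)^{1-β}/Γ(2-β). -/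
/-!
Put `g z = f (x + z) - f x - f' x * z`, so that `g 0 = g' 0 = 0` and `g'' z = f'' (x + z)`.
For `z > 0` the function
`F z = -g z * z ^ (-β) / β + g' z * z ^ (1 - β) / (β * (1 - β))`
has derivative `g z * z ^ (-1 - β) + z ^ (1 - β) * g'' z / (β * (1 - β))`, and it tends to `0`
at `0⁺` because `g = O(z²)` and `g' = O(z)` while `β < 2`. Integrating `F'` over `(0, a - x)`
expresses the singular integral through the Caputo integral and `F (a - x)`; the Gamma factors
are matched by `Γ(2 - β) = (1 - β) Γ(1 - β) = -β (1 - β) Γ(-β)`.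
-/
open Real MeasureTheory Set Filter Topology

lemma abs_le_mul_of_abs_deriv_le {φ φ' : ℝ → ℝ} {C z : ℝ}
    (hφ : ∀ t ∈ Icc 0 z, HasDerivAt φ (φ' t) t) (hφ0 : φ 0 = 0)
    (hC : ∀ t ∈ Ico 0 z, |φ' t| ≤ C) (hz : 0 ≤ z) : |φ z| ≤ C * z := by
  simpa [hφ0] using norm_image_sub_le_of_norm_deriv_le_segment'
    (fun t ht => (hφ t ht).hasDerivWithinAt) hC z ⟨hz, le_rfl⟩

section TaylorBounds

variable {g g' g'' : ℝ → ℝ} {L M : ℝ}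

lemma abs_deriv_le_of_abs_second_deriv_le (hg' : ∀ z ∈ Icc 0 L, HasDerivAt g' (g'' z) z)
    (hg'0 : g' 0 = 0) (hM : ∀ z ∈ Icc 0 L, |g'' z| ≤ M) :
    ∀ z ∈ Icc 0 L, |g' z| ≤ M * z := fun _ hz =>
  abs_le_mul_of_abs_deriv_le (fun t ht => hg' t ⟨ht.1, ht.2.trans hz.2⟩) hg'0
    (fun t ht => hM t ⟨ht.1, ht.2.le.trans hz.2⟩) hz.1

lemma abs_le_of_abs_second_deriv_le (hg : ∀ z ∈ Icc 0 L, HasDerivAt g (g' z) z)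
    (hg' : ∀ z ∈ Icc 0 L, HasDerivAt g' (g'' z) z) (hg0 : g 0 = 0) (hg'0 : g' 0 = 0)
    (hM : ∀ z ∈ Icc 0 L, |g'' z| ≤ M) :
    ∀ z ∈ Icc 0 L, |g z| ≤ M * z ^ 2 := by
  intro z hz
  have hM0 : 0 ≤ M := (abs_nonneg _).trans (hM 0 ⟨le_rfl, hz.1.trans hz.2⟩)
  have hg'z : ∀ t ∈ Ico 0 z, |g' t| ≤ M * z := fun t ht =>
    (abs_deriv_le_of_abs_second_deriv_le hg' hg'0 hM t ⟨ht.1, ht.2.le.trans hz.2⟩).trans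
      (mul_le_mul_of_nonneg_left ht.2.le hM0)
  calc |g z| ≤ M * z * z :=
        abs_le_mul_of_abs_deriv_le (fun t ht => hg t ⟨ht.1, ht.2.trans hz.2⟩) hg0 hg'z hz.1
    _ = M * z ^ 2 := by ring

end TaylorBounds

lemma tendsto_mul_rpow_nhdsGT_zero {φ : ℝ → ℝ} {M s : ℝ} {n : ℕ} (hsn : 0 < s + n)
    (hφ : ∀ᶠ z in 𝓝[>] 0, |φ z| ≤ M * z ^ n) :
    Tendsto (fun z => φ z * z ^ s) (𝓝[>] 0) (𝓝 0) := by
  have hlim : Tendsto (fun z : ℝ => M * z ^ (s + n)) (𝓝[>] 0) (𝓝 0) := by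
    have := ((continuousAt_rpow_const 0 (s + n) (Or.inr hsn.le)).tendsto.const_mul M)
    simpa [zero_rpow hsn.ne'] using this.mono_left nhdsWithin_le_nhds
  refine squeeze_zero_norm' ?_ hlim
  filter_upwards [hφ, self_mem_nhdsWithin] with z hz (hz0 : 0 < z)
  rw [norm_mul, norm_of_nonneg (rpow_nonneg hz0.le s), Real.norm_eq_abs,
    rpow_add_natCast hz0.ne', mul_comm (z ^ s), ← mul_assoc]
  exact mul_le_mul_of_nonneg_right hz (rpow_nonneg hz0.le s)

lemma intervalIntegrable_mul_rpow_of_abs_le_sq {φ : ℝ → ℝ} {M β L : ℝ} (hβ : β < 2)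
    (hL : 0 ≤ L) (hφc : ContinuousOn φ (Icc 0 L)) (hφ : ∀ z ∈ Icc 0 L, |φ z| ≤ M * z ^ 2) :
    IntervalIntegrable (fun z => φ z * z ^ (-1 - β)) volume 0 L := by
  rw [intervalIntegrable_iff_integrableOn_Ioc_of_le hL]
  have hdom : IntegrableOn (fun z : ℝ => M * z ^ (1 - β)) (Ioc 0 L) := by
    rw [← intervalIntegrable_iff_integrableOn_Ioc_of_le hL]
    exact (intervalIntegral.intervalIntegrable_rpow' (by linarith)).const_mul M
  refine hdom.mono' ?_ ?_
  · refine ContinuousOn.aestronglyMeasurable ?_ measurableSet_Ioc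
    exact (hφc.mono Ioc_subset_Icc_self).mul fun z hz =>
      (continuousAt_rpow_const z _ (Or.inl hz.1.ne')).continuousWithinAt
  · rw [ae_restrict_iff' measurableSet_Ioc]
    refine ae_of_all _ fun z hz => ?_
    have hz0 : 0 < z := hz.1
    have hpow : z ^ 2 * z ^ (-1 - β) = z ^ (1 - β) := by
      rw [mul_comm, ← rpow_add_natCast hz0.ne']
      norm_num [sub_add_eq_add_sub, neg_add_eq_sub]
    rw [norm_mul, norm_of_nonneg (rpow_nonneg hz0.le _), Real.norm_eq_abs, ← hpow, ← mul_assoc]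
    exact mul_le_mul_of_nonneg_right (hφ z ⟨hz0.le, hz.2⟩) (rpow_nonneg hz0.le _)

noncomputable def rpowWeightPrimitive (β : ℝ) (g g' : ℝ → ℝ) (z : ℝ) : ℝ :=
  -(g z * z ^ (-β)) / β + g' z * z ^ (1 - β) / (β * (1 - β))

lemma hasDerivAt_rpowWeightPrimitive {g g' : ℝ → ℝ} {β z g''z : ℝ} (hβ0 : β ≠ 0)
    (hβ1 : β ≠ 1) (hz : 0 < z) (hg : HasDerivAt g (g' z) z) (hg' : HasDerivAt g' g''z z) :
    HasDerivAt (rpowWeightPrimitive β g g')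
      (g z * z ^ (-1 - β) + z ^ (1 - β) * g''z / (β * (1 - β))) z := by
  have h1β : 1 - β ≠ 0 := sub_ne_zero.2 (Ne.symm hβ1)
  have hd := ((hg.mul (hasDerivAt_rpow_const (p := -β) (Or.inl hz.ne'))).neg.div_const β).add
    ((hg'.mul (hasDerivAt_rpow_const (p := 1 - β) (Or.inl hz.ne'))).div_const (β * (1 - β)))
  refine hd.congr_deriv ?_
  rw [show -β - 1 = -1 - β by ring, show 1 - β - 1 = -β by ring]
  field_simp
  ring

lemma continuousAt_rpowWeightPrimitive {g g' : ℝ → ℝ} {β z : ℝ} (hz : z ≠ 0)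
    (hg : ContinuousAt g z) (hg' : ContinuousAt g' z) :
    ContinuousAt (rpowWeightPrimitive β g g') z :=
  ((hg.mul (continuousAt_rpow_const z _ (Or.inl hz))).neg.div_const β).add
    ((hg'.mul (continuousAt_rpow_const z _ (Or.inl hz))).div_const (β * (1 - β)))

theorem integral_mul_rpow_neg_one_sub_eq {g g' g'' : ℝ → ℝ} {β L : ℝ} (hβ0 : β ≠ 0)
    (hβ1 : β ≠ 1) (hβ2 : β < 2) (hL : 0 < L) (hg : ∀ z ∈ Icc 0 L, HasDerivAt g (g' z) z)
    (hg' : ∀ z ∈ Icc 0 L, HasDerivAt g' (g'' z) z) (hg''c : ContinuousOn g'' (Icc 0 L))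
    (hg0 : g 0 = 0) (hg'0 : g' 0 = 0) :
    ∫ z in 0..L, g z * z ^ (-1 - β) =
      rpowWeightPrimitive β g g' L - (∫ z in 0..L, z ^ (1 - β) * g'' z) / (β * (1 - β)) := by
  obtain ⟨M, hM⟩ := isCompact_Icc.exists_bound_of_continuousOn hg''c
  have hgM := abs_le_of_abs_second_deriv_le hg hg' hg0 hg'0 hM
  have hg'M := abs_deriv_le_of_abs_second_deriv_le hg' hg'0 hM
  have hInt1 := intervalIntegrable_mul_rpow_of_abs_le_sq hβ2 hL.le
    (fun z hz => (hg z hz).continuousAt.continuousWithinAt) hgM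
  have hInt2 : IntervalIntegrable (fun z => z ^ (1 - β) * g'' z) volume 0 L :=
    (intervalIntegral.intervalIntegrable_rpow' (by linarith)).mul_continuousOn
      (by rwa [uIcc_of_le hL.le])
  have hnear0 : ∀ᶠ z in 𝓝[>] (0:ℝ), z ∈ Icc 0 L :=
    mem_of_superset (Ioc_mem_nhdsGT hL) Ioc_subset_Icc_self
  have hlim0 : Tendsto (rpowWeightPrimitive β g g') (𝓝[>] 0) (𝓝 0) := by
    have h1 := tendsto_mul_rpow_nhdsGT_zero (s := -β) (n := 2) (by push_cast; linarith)
      (hnear0.mono hgM)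
    have h2 := tendsto_mul_rpow_nhdsGT_zero (s := 1 - β) (n := 1) (by push_cast; linarith)
      (hnear0.mono fun z hz => by simpa using hg'M z hz)
    have h := (h1.neg.div_const β).add (h2.div_const (β * (1 - β)))
    rwa [neg_zero, zero_div, zero_div, add_zero] at h
  have hlimL : Tendsto (rpowWeightPrimitive β g g') (𝓝[<] L)
      (𝓝 (rpowWeightPrimitive β g g' L)) :=
    (continuousAt_rpowWeightPrimitive hL.ne' (hg L ⟨hL.le, le_rfl⟩).continuousAt
      (hg' L ⟨hL.le, le_rfl⟩).continuousAt).tendsto.mono_left nhdsWithin_le_nhds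
  have hFTC := intervalIntegral.integral_eq_sub_of_hasDerivAt_of_tendsto hL
    (fun z hz => hasDerivAt_rpowWeightPrimitive hβ0 hβ1 hz.1 (hg z (Ioo_subset_Icc_self hz))
      (hg' z (Ioo_subset_Icc_self hz)))
    (hInt1.add (hInt2.div_const _)) hlim0 hlimL
  rw [intervalIntegral.integral_add hInt1 (hInt2.div_const _), intervalIntegral.integral_div,
    sub_zero] at hFTC
  linarith

/-- For β ∈ (1,2), the left Caputo derivative equals the generator-type
singular integral plus boundary terms, for x < a. -/
theorem left_caputo_generator_form_order_two (β a : ℝ) (hβ : β ∈ Set.Ioo (1:ℝ) 2)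
    (f f' f'' : ℝ → ℝ) (hf' : ∀ t ∈ Set.Iic a, HasDerivAt f (f' t) t)
    (hf'' : ∀ t ∈ Set.Iic a, HasDerivAt f' (f'' t) t)
    (hf''c : ContinuousOn f'' (Set.Iic a)) (x : ℝ) (hx : x < a) :
    (1 / Real.Gamma (2 - β)) * ∫ t in x..a, (t - x) ^ (1 - β) * f'' t
      = (1 / Real.Gamma (-β)) *
          (∫ z in (0:ℝ)..(a - x), (f (x + z) - f x - f' x * z) * z ^ (-1 - β))
        + (f x - f a) * (a - x) ^ (-β) / Real.Gamma (1 - β)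
        - (β * f' x - f' a) * (a - x) ^ (1 - β) / Real.Gamma (2 - β) := by
  obtain ⟨hβ1, hβ2⟩ := hβ
  have hL : 0 < a - x := sub_pos.2 hx
  have hshift : ∀ z ∈ Icc 0 (a - x), x + z ∈ Iic a := fun z hz => by
    simp only [mem_Iic]; linarith [hz.2]
  have hg : ∀ z ∈ Icc 0 (a - x),
      HasDerivAt (fun z => f (x + z) - f x - f' x * z) (f' (x + z) - f' x) z := fun z hz => by
    exact ((((hf' _ (hshift z hz)).comp_const_add x z).sub_const (f x)).sub
      ((hasDerivAt_id z).const_mul (f' x))).congr_deriv (by ring)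
  have hg' : ∀ z ∈ Icc 0 (a - x), HasDerivAt (fun z => f' (x + z) - f' x) (f'' (x + z)) z :=
    fun z hz => ((hf'' _ (hshift z hz)).comp_const_add x z).sub_const (f' x)
  have hg''c : ContinuousOn (fun z => f'' (x + z)) (Icc 0 (a - x)) :=
    hf''c.comp (continuous_const_add x).continuousOn hshift
  have hsubst : ∫ z in 0..(a - x), z ^ (1 - β) * f'' (x + z)
      = ∫ t in x..a, (t - x) ^ (1 - β) * f'' t := by
    simpa using intervalIntegral.integral_comp_add_left
      (fun t => (t - x) ^ (1 - β) * f'' t) x (a := 0) (b := a - x)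
  have hΓ1 : Gamma (1 - β) = -β * Gamma (-β) := by
    rw [← Gamma_add_one (by linarith), neg_add_eq_sub]
  have hΓ2 : Gamma (2 - β) = (1 - β) * Gamma (1 - β) := by
    rw [← Gamma_add_one (by linarith)]; ring_nf
  have hΓ0 : Gamma (-β) ≠ 0 := by
    have := Gamma_pos_of_pos (show 0 < 2 - β by linarith)
    rw [hΓ2, hΓ1] at this
    exact right_ne_zero_of_mul this.ne' |> right_ne_zero_of_mul
  have hpow : (a - x) ^ (1 - β) = (a - x) ^ (-β) * (a - x) := by
    rw [← rpow_add_one hL.ne']; ring_nf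
  have hβ0 : β ≠ 0 := by linarith
  have h1β : 1 - β ≠ 0 := by linarith
  rw [integral_mul_rpow_neg_one_sub_eq hβ0 (by linarith) hβ2 hL hg hg' hg''c (by simp) (by simp),
    hsubst, rpowWeightPrimitive, show x + (a - x) = a by ring, hΓ2, hΓ1, hpow]
  field_simp
  ring
end

section
/- Let β ∈ (1,2), f ∈ C^2[a,∞) bounded with bounded first and second derivatives. Then the regularized interrupted generator A_{a+⋆}f(x) = (1/Γ(-β)) ∫_0^{x-a} (f(x-z)-f(x)+f'(x)z) z^{-1-β} dz + (f(x)-f(a))(x-a)^{-β}/Γ(1-β) + (β f'(x) - f'(a))(x-a)^{1-β}/Γ(2-β) tends to 0 as x → a+. -/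
/-!
Write `w = x - a` and let `M` bound `|f''|`. By Taylor's theorem the integrand is at most
`M z ^ (1 - β)` in absolute value, so the integral term is `O(w ^ (2 - β))`. Since
`Γ(2 - β) = (1 - β) Γ(1 - β)`, the two boundary terms regroup as
`(f x - f a - f' a w) w ^ (-β) / Γ(1 - β) + β (f' x - f' a) w ^ (1 - β) / Γ(2 - β)`,
whose numerators are `O(w ^ 2)` and `O(w)`; hence they are `O(w ^ (2 - β))` too, and
`w ^ (2 - β) → 0` because `β < 2`.
-/

open Real MeasureTheory Set Filter Topology Asymptotics

theorem Convex.abs_sub_sub_mul_le_of_hasDerivAt {S : Set ℝ} (hS : Convex ℝ S)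
    {g g' g'' : ℝ → ℝ} {M : ℝ} (hg : ∀ u ∈ S, HasDerivAt g (g' u) u)
    (hg' : ∀ u ∈ S, HasDerivAt g' (g'' u) u) (hM : ∀ u ∈ S, |g'' u| ≤ M)
    {s t : ℝ} (hs : s ∈ S) (ht : t ∈ S) :
    |g t - g s - g' s * (t - s)| ≤ M * (t - s) ^ 2 := by
  have hM0 : 0 ≤ M := (abs_nonneg _).trans (hM s hs)
  have hsub : uIcc s t ⊆ S := (convex_iff_ordConnected.1 hS).uIcc_subset hs ht
  have hlip : ∀ u ∈ uIcc s t, ‖g' u - g' s‖ ≤ M * |t - s| := fun u hu =>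
    calc ‖g' u - g' s‖ ≤ M * ‖u - s‖ :=
          hS.norm_image_sub_le_of_norm_hasDerivWithin_le
            (fun v hv => (hg' v hv).hasDerivWithinAt) hM hs (hsub hu)
      _ ≤ M * |t - s| := mul_le_mul_of_nonneg_left (abs_sub_left_of_mem_uIcc hu) hM0
  have hderiv : ∀ u ∈ uIcc s t,
      HasDerivWithinAt (fun v => g v - g' s * v) (g' u - g' s) (uIcc s t) u := fun u hu =>
    ((hg u (hsub hu)).sub ((hasDerivAt_id u).const_mul (g' s))).hasDerivWithinAt.congr_deriv
      (by simp)
  have := (convex_uIcc s t).norm_image_sub_le_of_norm_hasDerivWithin_le hderiv hlip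
    left_mem_uIcc right_mem_uIcc
  rw [Real.norm_eq_abs, Real.norm_eq_abs] at this
  calc |g t - g s - g' s * (t - s)| = |g t - g' s * t - (g s - g' s * s)| := by ring_nf
    _ ≤ M * |t - s| * |t - s| := this
    _ = M * (t - s) ^ 2 := by rw [mul_assoc, ← sq, sq_abs]

theorem isBigO_pow_mul_rpow {g : ℝ → ℝ} {a C q r : ℝ} {n : ℕ} (hr : n + q = r)
    (hg : ∀ x ∈ Ioi a, |g x| ≤ C * (x - a) ^ n) :
    (fun x => g x * (x - a) ^ q) =O[𝓝[>] a] fun x => (x - a) ^ r := by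
  refine IsBigO.of_bound C ?_
  filter_upwards [self_mem_nhdsWithin] with x hx
  have hw : 0 < x - a := sub_pos.2 hx
  rw [Real.norm_eq_abs, Real.norm_eq_abs, abs_mul, abs_of_pos (rpow_pos_of_pos hw q),
    abs_of_pos (rpow_pos_of_pos hw r), ← hr, rpow_add hw, rpow_natCast, ← mul_assoc]
  exact mul_le_mul_of_nonneg_right (hg x hx) (rpow_pos_of_pos hw q).le

theorem abs_integral_mul_rpow_le {φ : ℝ → ℝ} {β C w : ℝ} (hβ : β < 2) (hw : 0 ≤ w)
    (hφ : ∀ z ∈ Ioc 0 w, |φ z| ≤ C * z ^ 2) :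
    |∫ z in 0..w, φ z * z ^ (-1 - β)| ≤ C / (2 - β) * w ^ (2 - β) := by
  have hbound : ∀ z ∈ Ioc 0 w, ‖φ z * z ^ (-1 - β)‖ ≤ C * z ^ (1 - β) := fun z hz => by
    have hz0 : 0 < z := hz.1
    calc ‖φ z * z ^ (-1 - β)‖ = |φ z| * z ^ (-1 - β) := by
          rw [Real.norm_eq_abs, abs_mul, abs_of_pos (rpow_pos_of_pos hz0 _)]
      _ ≤ C * z ^ 2 * z ^ (-1 - β) :=
          mul_le_mul_of_nonneg_right (hφ z hz) (rpow_pos_of_pos hz0 _).le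
      _ = C * z ^ (1 - β) := by
          rw [mul_assoc, ← rpow_natCast, ← rpow_add hz0]; congr 2; push_cast; ring
  have hint : ∫ z in 0..w, C * z ^ (1 - β) = C / (2 - β) * w ^ (2 - β) := by
    rw [intervalIntegral.integral_const_mul, integral_rpow (Or.inl (by linarith)),
      show 1 - β + 1 = 2 - β by ring, zero_rpow (by linarith)]
    ring
  rw [← hint, ← Real.norm_eq_abs]
  exact intervalIntegral.norm_integral_le_of_norm_le hw (.of_forall hbound)
    ((intervalIntegral.intervalIntegrable_rpow' (by linarith)).const_mul C)

theorem isBigO_integral_mul_rpow {φ : ℝ → ℝ → ℝ} {a β C : ℝ} (hβ : β < 2)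
    (hφ : ∀ x ∈ Ioi a, ∀ z ∈ Ioc 0 (x - a), |φ x z| ≤ C * z ^ 2) :
    (fun x => ∫ z in 0..(x - a), φ x z * z ^ (-1 - β)) =O[𝓝[>] a]
      fun x => (x - a) ^ (2 - β) := by
  refine IsBigO.of_bound (C / (2 - β)) ?_
  filter_upwards [self_mem_nhdsWithin] with x hx
  have hw : 0 < x - a := sub_pos.2 hx
  rw [Real.norm_eq_abs, Real.norm_eq_abs, abs_of_pos (rpow_pos_of_pos hw _)]
  exact abs_integral_mul_rpow_le hβ hw.le (hφ x hx)

theorem tendsto_sub_rpow_nhdsGT {a r : ℝ} (hr : 0 < r) :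
    Tendsto (fun x => (x - a) ^ r) (𝓝[>] a) (𝓝 0) := by
  have : Tendsto (fun x => x - a) (𝓝[>] a) (𝓝 0) :=
    tendsto_nhdsWithin_of_tendsto_nhds (by simpa using (continuous_sub_right a).tendsto a)
  simpa [zero_rpow hr.ne'] using this.rpow_const (Or.inr hr.le)

theorem Real.Gamma_ne_zero_of_mem_Ioo {s : ℝ} (hs : s ∈ Ioo (-1) 0) : Gamma s ≠ 0 :=
  Gamma_ne_zero fun m hm => by
    have h0 : (0 : ℝ) < m := by linarith [hs.2]
    have h1 : (m : ℝ) < 1 := by linarith [hs.1]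
    norm_cast at h0 h1
    omega

theorem boundary_terms_eq_remainders {β w p q r : ℝ} (hw : 0 < w) (hΓ : Gamma (1 - β) ≠ 0) :
    p * w ^ (-β) / Gamma (1 - β) + (β * q - r) * w ^ (1 - β) / Gamma (2 - β)
      = (p - r * w) * w ^ (-β) / Gamma (1 - β) + β * (q - r) * w ^ (1 - β) / Gamma (2 - β) := by
  have h1β : 1 - β ≠ 0 := fun h => hΓ (by rw [h, Gamma_zero])
  have hpow : w ^ (1 - β) = w ^ (-β) * w := by rw [← rpow_add_one hw.ne']; ring_nf
  rw [show 2 - β = 1 - β + 1 by ring, Gamma_add_one h1β, hpow]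
  field_simp
  ring

theorem regularized_generator_vanishes_at_boundary_general (β a : ℝ) (hβ : β ∈ Set.Ioo (1:ℝ) 2)
    (f f' f'' : ℝ → ℝ) (hf' : ∀ t ∈ Set.Ici a, HasDerivAt f (f' t) t)
    (hf'' : ∀ t ∈ Set.Ici a, HasDerivAt f' (f'' t) t)
    (hbdd : ∃ M : ℝ, ∀ t, |f t| ≤ M ∧ |f' t| ≤ M ∧ |f'' t| ≤ M) :
    Filter.Tendsto (fun x : ℝ =>
        (1 / Real.Gamma (-β)) *
          (∫ z in (0:ℝ)..(x - a), (f (x - z) - f x + f' x * z) * z ^ (-1 - β))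
        + (f x - f a) * (x - a) ^ (-β) / Real.Gamma (1 - β)
        + (β * f' x - f' a) * (x - a) ^ (1 - β) / Real.Gamma (2 - β))
      (nhdsWithin a (Set.Ioi a)) (nhds 0) := by
  obtain ⟨hβ1, hβ2⟩ := hβ
  obtain ⟨M, hM⟩ := hbdd
  have hΓ : Gamma (1 - β) ≠ 0 := Gamma_ne_zero_of_mem_Ioo ⟨by linarith, by linarith⟩
  have taylor : ∀ s ∈ Ici a, ∀ t ∈ Ici a, |f t - f s - f' s * (t - s)| ≤ M * (t - s) ^ 2 :=
    fun s hs t ht => (convex_Ici a).abs_sub_sub_mul_le_of_hasDerivAt hf' hf''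
      (fun u _ => (hM u).2.2) hs ht
  have lip : ∀ x ∈ Ioi a, |f' x - f' a| ≤ M * (x - a) ^ 1 := fun x hx => by
    simpa [abs_of_pos (sub_pos.2 (mem_Ioi.1 hx))] using
      (convex_Ici a).norm_image_sub_le_of_norm_hasDerivWithin_le
        (fun u hu => (hf'' u hu).hasDerivWithinAt) (fun u _ => (hM u).2.2) self_mem_Ici
        (mem_Ici.2 hx.le)
  have hI := isBigO_integral_mul_rpow (φ := fun x z => f (x - z) - f x + f' x * z) hβ2
    fun x hx z hz => by
      simpa using taylor x (mem_Ici.2 hx.le) (x - z) (mem_Ici.2 (by linarith [hz.2]))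
  have hA := isBigO_pow_mul_rpow (q := -β) (r := 2 - β) (by push_cast; ring)
    fun x hx => taylor a self_mem_Ici x (mem_Ici.2 hx.le)
  have hB := isBigO_pow_mul_rpow (q := 1 - β) (r := 2 - β) (by push_cast; ring) lip
  refine ((((hI.const_mul_left (1 / Gamma (-β))).add (hA.const_mul_left (Gamma (1 - β))⁻¹)).add
    (hB.const_mul_left (β / Gamma (2 - β)))).trans_tendsto
      (tendsto_sub_rpow_nhdsGT (by linarith))).congr' ?_
  filter_upwards [self_mem_nhdsWithin] with x hx
  rw [add_assoc, add_assoc, boundary_terms_eq_remainders (sub_pos.2 hx.out) hΓ]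
  ring

/-- For β ∈ (1,2) and f ∈ C²[a,∞) bounded with bounded first and second
derivatives, the regularized interrupted generator A_{a+⋆}f(x) tends to 0 as x → a+. -/
theorem regularized_generator_vanishes_at_boundary (β a : ℝ) (hβ : β ∈ Set.Ioo (1:ℝ) 2)
    (f f' f'' : ℝ → ℝ) (hf' : ∀ t ∈ Set.Ici a, HasDerivAt f (f' t) t)
    (hf'' : ∀ t ∈ Set.Ici a, HasDerivAt f' (f'' t) t)
    (hf''c : ContinuousOn f'' (Set.Ici a))
    (hbdd : ∃ M : ℝ, ∀ t, |f t| ≤ M ∧ |f' t| ≤ M ∧ |f'' t| ≤ M) :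
    Filter.Tendsto (fun x : ℝ =>
        (1 / Real.Gamma (-β)) *
          (∫ z in (0:ℝ)..(x - a), (f (x - z) - f x + f' x * z) * z ^ (-1 - β))
        + (f x - f a) * (x - a) ^ (-β) / Real.Gamma (1 - β)
        + (β * f' x - f' a) * (x - a) ^ (1 - β) / Real.Gamma (2 - β))
      (nhdsWithin a (Set.Ioi a)) (nhds 0) :=
  regularized_generator_vanishes_at_boundary_general β a hβ f f' f'' hf' hf'' hbdd
end
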